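/- Let k be an algebraically closed field of characteristic zero and V a finite-dimensional k-vector space. The map sending an unordered n-tuple [x₁,…,xₙ] of points of V to the tuple (c₁,…,cₙ), where cᵢ ∈ SⁱV is the i-th elementary symmetric polynomial in x₁,…,xₙ, is a closed embedding of the Chow variety Chowⁿ(V) = Vⁿ/𝔖ₙ into V × S²V × ⋯ × SⁿV. -/

import Mathlib

/-!
STATEMENT 4: For `k` algebraically closed of characteristic zero and `V` a `d`-dimensional
`k`-vector space, the map `[x₁,…,xₙ] ↦ (c₁,…,cₙ)`, with `cᵢ ∈ SⁱV` the `i`-th elementary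
symmetric polynomial of `x₁,…,xₙ ∈ V`, is a closed embedding
`Chowⁿ(V) = Vⁿ/𝔖ₙ ↪ V × S²V × ⋯ × SⁿV`.

Scheme-theoretically, `Chowⁿ(V) = Spec k[Vⁿ]^{𝔖ₙ}`, and the morphism being a closed
immersion means exactly that the corresponding `k`-algebra homomorphism
`k[V × S²V × ⋯ × SⁿV] → k[Vⁿ]^{𝔖ₙ}` is surjective, i.e. that the invariant ring
`k[Vⁿ]^{𝔖ₙ}` is generated as a `k`-algebra by the coordinates of `c₁,…,cₙ`
(it always contains them).  This is the form in which we state the theorem.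

Concretely, `k[Vⁿ] = k[x_{j,l} : j ∈ Fin n, l ∈ Fin d]`, the symmetric algebra `S(V)` is
`k[u₁,…,u_d]`, the point `x_j` corresponds to the generic linear form
`ℓ_j = ∑_l x_{j,l} u_l`, and `cᵢ = eᵢ(ℓ₁,…,ℓₙ) ∈ SⁱV`; its coordinates are the
coefficients of `cᵢ` as a polynomial in `u₁,…,u_d`.
-/

open MvPolynomial

/-- The `𝔖ₙ`-invariants of `k[Vⁿ]` for `V = k^d`: the coordinate ring of `Chowⁿ(V)`. -/
noncomputable def chowInvariants (k : Type*) [CommSemiring k] (n d : ℕ) :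
    Subalgebra k (MvPolynomial (Fin n × Fin d) k) where
  carrier := {p | ∀ σ : Equiv.Perm (Fin n), rename (fun q => (σ q.1, q.2)) p = p}
  mul_mem' {a b} ha hb := fun σ => by rw [map_mul, ha σ, hb σ]
  add_mem' {a b} ha hb := fun σ => by rw [map_add, ha σ, hb σ]
  one_mem' := fun σ => by rw [map_one]
  zero_mem' := fun σ => by rw [map_zero]
  algebraMap_mem' r := fun σ => by
    simp [MvPolynomial.algebraMap_eq, rename_C]

/-- The generic linear form `ℓ_j = ∑_l x_{j,l} u_l ∈ S(V) ⊗ k[Vⁿ]`, the "universal point"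
`x_j ∈ V` viewed inside the symmetric algebra `S(V) = k[u,…]` with coefficients in
`k[Vⁿ]`. -/
noncomputable def genericLinearForm (k : Type*) [CommSemiring k] (n d : ℕ) (j : Fin n) :
    MvPolynomial (Fin d) (MvPolynomial (Fin n × Fin d) k) :=
  ∑ l : Fin d, MvPolynomial.C (MvPolynomial.X (j, l)) * MvPolynomial.X l

/-- The `i`-th elementary symmetric polynomial `cᵢ = eᵢ(ℓ₁,…,ℓₙ) ∈ SⁱV ⊗ k[Vⁿ]` of the
universal points. -/
noncomputable def chowESymm (k : Type*) [CommSemiring k] (n d : ℕ) (i : ℕ) :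
    MvPolynomial (Fin d) (MvPolynomial (Fin n × Fin d) k) :=
  ((Finset.univ.val : Multiset (Fin n)).map (genericLinearForm k n d)).esymm i

/-! In characteristic zero, averaging over `𝔖ₙ` shows that the invariant ring is spanned by the
symmetrizations `∑_σ ∏_j x_{σ j}^{ν_j}` of monomials. Each of these is a polynomial in the
polarized power sums `∑_j x_j^m`: multiplying the symmetrization with the exponent of one point
`j₀` removed by the power sum of that exponent gives a positive multiple of the original one plus
symmetrizations supported on fewer points.

Up to the nonzero multinomial coefficient, the polarized power sum `∑_j x_j^m` is the coefficient
of `u^m` in the power sum `∑_j ℓ_j^{|m|}` of the generic linear forms. By the fundamental theorem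
on symmetric polynomials that power sum is a polynomial in `c₁,…,cₙ`, so its coefficients lie in
the algebra generated by the coefficients of the `cᵢ`. -/

theorem Subalgebra.mem_of_nsmul_mem {k R : Type*} [Field k] [CharZero k] [Ring R] [Algebra k R]
    (A : Subalgebra k R) {m : ℕ} (hm : m ≠ 0) {x : R} (h : m • x ∈ A) : x ∈ A := by
  rw [← Nat.cast_smul_eq_nsmul k] at h
  exact (A.toSubmodule.smul_mem_iff (Nat.cast_ne_zero.mpr hm)).mp h

theorem MvPolynomial.aeval_mem_of_isSymmetric {R S ι : Type*} [CommRing R] [CommSemiring S]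
    [Algebra R S] [Fintype ι] (B : Subalgebra R S) (x : ι → S)
    (hx : ∀ i ∈ Finset.Icc 1 (Fintype.card ι), aeval x (esymm ι R i) ∈ B)
    {P : MvPolynomial ι R} (hP : P.IsSymmetric) : aeval x P ∈ B := by
  obtain ⟨Q, hQ⟩ := esymmAlgHom_surjective R (n := Fintype.card ι) le_rfl ⟨P, hP⟩
  have hPQ : P = aeval (fun i : Fin (Fintype.card ι) => esymm ι R (i + 1)) Q := by
    rw [← esymmAlgHom_apply, hQ]
  rw [hPQ, ← AlgHom.comp_apply, comp_aeval]
  refine (show (aeval _).range ≤ B from ?_) ⟨Q, rfl⟩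
  rw [← Algebra.adjoin_range_eq_range_aeval, Algebra.adjoin_le_iff]
  rintro _ ⟨i, rfl⟩
  exact hx _ (Finset.mem_Icc.mpr ⟨i.val.succ_pos, i.isLt⟩)

lemma MvPolynomial.mem_range_mapAlgHom_val_iff {R S σ : Type*} [CommSemiring R] [CommSemiring S]
    [Algebra R S] {B : Subalgebra R S} {p : MvPolynomial σ S} :
    p ∈ (mapAlgHom B.val).range ↔ ∀ m, coeff m p ∈ B := by
  have := SetLike.ext_iff.mp (range_mapAlgHom (σ := σ) B.val) p
  rwa [Subalgebra.range_val] at this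

namespace Multisymmetric

variable {ι M R : Type*} [Fintype ι] [DecidableEq ι] [AddCommMonoid M]

section CommSemiring

variable [CommSemiring R]

-- `ψ j a` plays the role of the monomial `x_j^a` in the coordinates of the `j`-th point.
def powerSum (ψ : ι → AddChar M R) (a : M) : R := ∑ j, ψ j a

def symmetrize (ψ : ι → AddChar M R) (ν : ι → M) : R :=
  ∑ σ : Equiv.Perm ι, ∏ j, ψ (σ j) (ν j)

variable (ψ : ι → AddChar M R)

lemma symmetrize_zero : symmetrize ψ 0 = Fintype.card (Equiv.Perm ι) := by
  simp [symmetrize]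

lemma symmetrize_comp_perm (ν : ι → M) (τ : Equiv.Perm ι) :
    symmetrize ψ (ν ∘ τ) = symmetrize ψ ν := by
  refine Fintype.sum_equiv (Equiv.mulRight τ⁻¹) _ _ fun σ => ?_
  rw [← Equiv.prod_comp τ (fun j => ψ ((Equiv.mulRight τ⁻¹ σ) j) (ν j))]
  simp [Equiv.Perm.mul_apply]

lemma symmetrize_update_eq_of_eq_zero {ν : ι → M} {i j : ι} (hi : ν i = 0) (hj : ν j = 0)
    (a : M) : symmetrize ψ (Function.update ν i a) = symmetrize ψ (Function.update ν j a) := by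
  have hswap : ν ∘ Equiv.swap i j = ν := by
    rw [Equiv.comp_swap_eq_update, hi, ← hj, Function.update_eq_self, hj, ← hi,
      Function.update_eq_self]
  rw [← symmetrize_comp_perm ψ _ (Equiv.swap i j), Function.update_comp_equiv, hswap,
    Equiv.symm_swap, Equiv.swap_apply_left]

lemma powerSum_mul_symmetrize (a : M) (ν : ι → M) :
    powerSum ψ a * symmetrize ψ ν =
      ∑ j, symmetrize ψ (Function.update ν j (ν j + a)) := by
  simp only [powerSum, symmetrize, Finset.sum_mul_sum]
  rw [Finset.sum_comm]
  conv_rhs => rw [Finset.sum_comm]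
  refine Finset.sum_congr rfl fun σ _ => ?_
  rw [← Equiv.sum_comp σ]
  refine Finset.sum_congr rfl fun j _ => ?_
  have hrest : ∏ x ∈ Finset.univ.erase j, ψ (σ x) (Function.update ν j (ν j + a) x) =
      ∏ x ∈ Finset.univ.erase j, ψ (σ x) (ν x) :=
    Finset.prod_congr rfl fun x hx => by rw [Function.update_of_ne (Finset.ne_of_mem_erase hx)]
  rw [← Finset.mul_prod_erase _ (fun x => ψ (σ x) (Function.update ν j (ν j + a) x))
      (Finset.mem_univ j), hrest, Function.update_self, AddChar.map_add_eq_mul,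
    ← Finset.mul_prod_erase _ (fun x => ψ (σ x) (ν x)) (Finset.mem_univ j)]
  ring

end CommSemiring

variable {k : Type*} [Field k] [CharZero k] [CommRing R] [Algebra k R]

theorem symmetrize_mem_of_powerSum_mem (ψ : ι → AddChar M R) (A : Subalgebra k R)
    (hA : ∀ a, powerSum ψ a ∈ A) (ν : ι → M) : symmetrize ψ ν ∈ A := by
  suffices ∀ s : Finset ι, ∀ ν : ι → M, (∀ j ∉ s, ν j = 0) → symmetrize ψ ν ∈ A from
    this Finset.univ ν fun j hj => absurd (Finset.mem_univ j) hj
  intro s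
  induction s using Finset.induction_on with
  | empty =>
    intro ν hν
    obtain rfl : ν = 0 := funext fun j => hν j (Finset.notMem_empty j)
    rw [symmetrize_zero]
    exact A.natCast_mem _
  | insert j₀ s hj₀ ih =>
    intro ν hν
    set ν' := Function.update ν j₀ 0 with hν'_def
    have hν' : ∀ j ∉ s, ν' j = 0 := fun j hj => by
      rcases eq_or_ne j j₀ with rfl | hne
      · exact Function.update_self ..
      · rw [hν'_def, Function.update_of_ne hne]
        exact hν j (by simp [hne, hj])
    have hcompl : ∀ j ∈ sᶜ,
        symmetrize ψ (Function.update ν' j (ν' j + ν j₀)) = symmetrize ψ ν := by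
      intro j hj
      rw [hν' j (Finset.mem_compl.mp hj), zero_add,
        symmetrize_update_eq_of_eq_zero ψ (hν' j (Finset.mem_compl.mp hj)) (hν' j₀ hj₀),
        Function.update_idem, Function.update_eq_self]
    -- Putting the exponent `ν j₀` back on a point outside `s` recovers `ν` up to a permutation.
    have key := powerSum_mul_symmetrize ψ (ν j₀) ν'
    rw [← Finset.sum_add_sum_compl s, Finset.sum_congr rfl hcompl, Finset.sum_const] at key
    refine A.mem_of_nsmul_mem (Finset.card_ne_zero_of_mem (Finset.mem_compl.mpr hj₀)) ?_
    rw [eq_sub_of_add_eq' key.symm]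
    refine A.sub_mem (A.mul_mem (hA _) (ih ν' hν')) (A.sum_mem fun j hj => ih _ fun x hx => ?_)
    rw [Function.update_of_ne (ne_of_mem_of_not_mem hj hx).symm]
    exact hν' x hx

end Multisymmetric

open Multisymmetric

section RowMonomial

variable (k : Type*) [CommSemiring k] {ι κ : Type*}

noncomputable def rowMonomial (j : ι) : AddChar (κ →₀ ℕ) (MvPolynomial (ι × κ) k) where
  toFun m := m.prod fun l e => X (j, l) ^ e
  map_zero_eq_one' := Finsupp.prod_zero_index
  map_add_eq_mul' _ _ := Finsupp.prod_add_index' (fun _ => pow_zero _) fun _ _ _ => pow_add _ _ _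

variable {k}

lemma rowMonomial_apply (j : ι) (m : κ →₀ ℕ) :
    rowMonomial k j m = m.prod fun l e => X (j, l) ^ e := rfl

lemma rename_rowMonomial (σ : Equiv.Perm ι) (j : ι) (m : κ →₀ ℕ) :
    rename (fun q : ι × κ => (σ q.1, q.2)) (rowMonomial k j m) = rowMonomial k (σ j) m := by
  simp [rowMonomial_apply, map_finsuppProd, rename_X]

lemma monomial_one_eq_prod_rowMonomial [Fintype ι] [Fintype κ] (μ : ι × κ →₀ ℕ) :
    monomial μ (1 : k) = ∏ j, rowMonomial k j (μ.curry j) := by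
  rw [monomial_eq, C_1, one_mul, Finsupp.prod_fintype _ _ fun _ => pow_zero _,
    Fintype.prod_prod_type]
  refine Finset.prod_congr rfl fun j _ => ?_
  rw [rowMonomial_apply, Finsupp.prod_fintype _ _ fun _ => pow_zero _]
  rfl

lemma sum_rename_monomial_one [Fintype ι] [DecidableEq ι] [Fintype κ] (μ : ι × κ →₀ ℕ) :
    ∑ σ : Equiv.Perm ι, rename (fun q : ι × κ => (σ q.1, q.2)) (monomial μ (1 : k)) =
      symmetrize (rowMonomial k) μ.curry := by
  simp only [monomial_one_eq_prod_rowMonomial, map_prod, rename_rowMonomial, symmetrize]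

end RowMonomial

theorem chowInvariants_le_of_powerSum_mem {k : Type*} [Field k] [CharZero k] {n d : ℕ}
    (A : Subalgebra k (MvPolynomial (Fin n × Fin d) k))
    (hA : ∀ m, powerSum (rowMonomial k) m ∈ A) : chowInvariants k n d ≤ A := by
  intro p hp
  have horbit : ∀ q : MvPolynomial (Fin n × Fin d) k,
      ∑ σ : Equiv.Perm (Fin n), rename (fun q => (σ q.1, q.2)) q ∈ A := by
    intro q
    induction q using MvPolynomial.induction_on' with
    | monomial μ c =>
      rw [← mul_one c, ← smul_eq_mul, ← smul_monomial]
      simp only [map_smul, ← Finset.smul_sum, sum_rename_monomial_one]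
      exact A.smul_mem (symmetrize_mem_of_powerSum_mem _ A hA _) c
    | add q r hq hr =>
      simpa only [map_add, Finset.sum_add_distrib] using A.add_mem hq hr
  refine A.mem_of_nsmul_mem (Fintype.card_ne_zero (α := Equiv.Perm (Fin n))) ?_
  rw [← Finset.card_univ, ← Finset.sum_const]
  simpa only [show ∀ σ : Equiv.Perm (Fin n), rename (fun q => (σ q.1, q.2)) p = p from hp]
    using horbit p

section GenericLinearForm

variable {k : Type*} [CommSemiring k] {n d : ℕ}

lemma chowESymm_eq_aeval (i : ℕ) :
    chowESymm k n d i = aeval (genericLinearForm k n d) (esymm (Fin n) k i) :=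
  (aeval_esymm_eq_multiset_esymm _ _ _ _).symm

lemma mapAlgHom_rename_genericLinearForm (σ : Equiv.Perm (Fin n)) (j : Fin n) :
    mapAlgHom (rename fun q : Fin n × Fin d => (σ q.1, q.2)) (genericLinearForm k n d j) =
      genericLinearForm k n d (σ j) := by
  simp [genericLinearForm, rename_X]

lemma coeff_chowESymm_mem_chowInvariants (i : ℕ) (m : Fin d →₀ ℕ) :
    coeff m (chowESymm k n d i) ∈ chowInvariants k n d := fun σ => by
  have hsymm : mapAlgHom (rename fun q : Fin n × Fin d => (σ q.1, q.2)) (chowESymm k n d i) =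
      chowESymm k n d i := by
    rw [chowESymm_eq_aeval, ← AlgHom.comp_apply, comp_aeval]
    simp only [mapAlgHom_rename_genericLinearForm]
    rw [← Function.comp_def (genericLinearForm k n d) σ, ← aeval_rename,
      esymm_isSymmetric _ _ _ σ]
  conv_rhs => rw [← hsymm]
  rw [mapAlgHom_apply, coeff_map]
  rfl

lemma coeff_sum_genericLinearForm_pow (m : Fin d →₀ ℕ) :
    coeff m (∑ j, genericLinearForm k n d j ^ m.degree) =
      (m.multinomial : MvPolynomial (Fin n × Fin d) k) * powerSum (rowMonomial k) m := by
  simp only [genericLinearForm, ← smul_eq_C_mul, coeff_sum,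
    coeff_linearCombination_X_pow_of_fintype, powerSum, Finset.mul_sum]
  exact Finset.sum_congr rfl fun j _ => if_pos rfl

end GenericLinearForm

theorem powerSum_rowMonomial_mem_of_coeff_chowESymm_mem {k : Type*} [Field k] [CharZero k] {n d : ℕ}
    (B : Subalgebra k (MvPolynomial (Fin n × Fin d) k))
    (hB : ∀ i ∈ Finset.Icc 1 n, ∀ m : Fin d →₀ ℕ, coeff m (chowESymm k n d i) ∈ B)
    (m : Fin d →₀ ℕ) : powerSum (rowMonomial k) m ∈ B := by
  have hpsum : ∑ j, genericLinearForm k n d j ^ m.degree ∈ (mapAlgHom B.val).range := by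
    have h := aeval_mem_of_isSymmetric _ (genericLinearForm k n d)
      (fun i hi => by
        rw [← chowESymm_eq_aeval, mem_range_mapAlgHom_val_iff]
        exact hB i (by simpa using hi))
      (psum_isSymmetric (Fin n) k m.degree)
    simpa only [psum, map_sum, map_pow, aeval_X] using h
  have hcoeff := mem_range_mapAlgHom_val_iff.mp hpsum m
  rw [coeff_sum_genericLinearForm_pow, ← nsmul_eq_mul] at hcoeff
  exact B.mem_of_nsmul_mem (Nat.multinomial_pos _ _).ne' hcoeff

theorem chow_closed_embedding_general (k : Type*) [Field k] [CharZero k]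
    (n d : ℕ) :
    Algebra.adjoin k
        {r : MvPolynomial (Fin n × Fin d) k |
          ∃ i ∈ Finset.Icc 1 n, ∃ m : (Fin d) →₀ ℕ,
            r = MvPolynomial.coeff m (chowESymm k n d i)} =
      chowInvariants k n d := by
  apply le_antisymm
  · rw [Algebra.adjoin_le_iff]
    rintro _ ⟨i, -, m, rfl⟩
    exact coeff_chowESymm_mem_chowInvariants i m
  · exact chowInvariants_le_of_powerSum_mem _ <|
      powerSum_rowMonomial_mem_of_coeff_chowESymm_mem _ fun i hi m =>
        Algebra.subset_adjoin ⟨i, hi, m, rfl⟩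

/-- the coordinates (coefficients in `u`) of `c₁,…,cₙ` generate the invariant
ring `k[Vⁿ]^{𝔖ₙ}` as a `k`-algebra; equivalently, `Chowⁿ(V) → V × S²V × ⋯ × SⁿV` is a
closed embedding. -/
theorem chow_closed_embedding (k : Type*) [Field k] [IsAlgClosed k] [CharZero k]
    (n d : ℕ) :
    Algebra.adjoin k
        {r : MvPolynomial (Fin n × Fin d) k |
          ∃ i ∈ Finset.Icc 1 n, ∃ m : (Fin d) →₀ ℕ,
            r = MvPolynomial.coeff m (chowESymm k n d i)} =
      chowInvariants k n d :=
  chow_closed_embedding_general k n d
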